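/- arXiv:2204.06549 — 5 statements merged into one kernel-verified Lean document; each statement's English description precedes it below -/
import Mathlib

section
/- Let 0 < α < γ < 1, ψ > 0, V ≥ 0, L ≥ 0, W ∈ ℝ, and let U : ℝ → ℝ be strictly increasing and strictly concave on ℝ. Define the feasible set D = {(φ,t,L_c) ∈ ℝ³ : φ ≥ 0, 0 ≤ t ≤ L, L_c ≥ 0, and (if (γ−α)·t ≥ ψ then φ + ψ + α·t ≤ V else φ + γ·t ≤ V)} and the objective G(φ,t,L_c) = (if (γ−α)·t ≥ ψ then H^h(φ,t,L_c) else H^l(φ,t,L_c)), where H^l(φ,t,L_c) = γ·U(W + φ − γ·L_c − L + t + L_c) + (1−γ)·U(W + φ − γ·L_c) and H^h(φ,t,L_c) = α·U(W + φ − α·L_c − L + t + L_c) + (1−α)·U(W + φ − α·L_c). If ψ > (γ−α)·L or γ·ψ > (γ−α)·V, then (φ,t,L_c) = (V, 0, L) is a maximizer of G over D, with optimal value U(W + V − γ·L). -/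
/-- Scenario A contract design (Theorem 1, first case): if `ψ > (γ−α)·L` or
`γ·ψ > (γ−α)·V`, then the contract `(φ,t,L_c) = (V, 0, L)` maximizes the provider's
expected utility `G` over the feasible set `D`, with optimal value `U(W + V − γ·L)`. -/
theorem scenarioA_optimal_contract_low_investment
    (α γ V W L ψ : ℝ) (hα : 0 < α) (hαγ : α < γ) (hγ : γ < 1)
    (hψ : 0 < ψ) (hV : 0 ≤ V) (hL : 0 ≤ L)
    (U : ℝ → ℝ) (hUmono : StrictMono U) (hUconc : StrictConcaveOn ℝ Set.univ U)
    (Hl Hh : ℝ → ℝ → ℝ → ℝ)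
    (hHl : ∀ φ t Lc, Hl φ t Lc =
      γ * U (W + φ - γ * Lc - L + t + Lc) + (1 - γ) * U (W + φ - γ * Lc))
    (hHh : ∀ φ t Lc, Hh φ t Lc =
      α * U (W + φ - α * Lc - L + t + Lc) + (1 - α) * U (W + φ - α * Lc))
    (D : Set (ℝ × ℝ × ℝ))
    (hD : D = {x : ℝ × ℝ × ℝ |
      0 ≤ x.1 ∧ 0 ≤ x.2.1 ∧ x.2.1 ≤ L ∧ 0 ≤ x.2.2 ∧
      (if ψ ≤ (γ - α) * x.2.1 then x.1 + ψ + α * x.2.1 ≤ V else x.1 + γ * x.2.1 ≤ V)})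
    (G : ℝ × ℝ × ℝ → ℝ)
    (hG : ∀ x : ℝ × ℝ × ℝ, G x =
      if ψ ≤ (γ - α) * x.2.1 then Hh x.1 x.2.1 x.2.2 else Hl x.1 x.2.1 x.2.2)
    (hcase : ψ > (γ - α) * L ∨ γ * ψ > (γ - α) * V) :
    (V, 0, L) ∈ D ∧ IsMaxOn G D (V, 0, L) ∧ G (V, 0, L) = U (W + V - γ * L) := by
  have hnot : ¬ ψ ≤ (γ - α) * (0 : ℝ) := by
    simp; linarith
  have hG0 : G (V, 0, L) = U (W + V - γ * L) := by
    rw [hG]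
    simp only [if_neg hnot]
    rw [hHl]
    have h1 : W + V - γ * L - L + 0 + L = W + V - γ * L := by ring
    rw [h1]; ring
  refine ⟨?_, ?_, hG0⟩
  · rw [hD]
    simp only [Set.mem_setOf_eq, mul_zero]
    refine ⟨hV, le_refl 0, hL, hL, ?_⟩
    rw [if_neg (by linarith : ¬ψ ≤ (0:ℝ))]; linarith
  · intro x hx
    obtain ⟨φ, t, Lc⟩ := x
    rw [hD] at hx
    obtain ⟨hφ, ht0, htL, hLc, hcon⟩ := hx
    simp only [Set.mem_setOf_eq] at hφ ht0 htL hLc hcon ⊢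
    rw [hG0, hG]
    by_cases hb : ψ ≤ (γ - α) * t
    · -- high branch infeasible under hcase
      exfalso
      rw [if_pos hb] at hcon
      rcases hcase with h | h
      · nlinarith
      · -- γψ ≤ (γ-α)V follows
        have hγα : 0 < γ - α := by linarith
        nlinarith
    · rw [if_neg hb, hHl]
      rw [if_neg hb] at hcon
      set a := W + φ - γ * Lc - L + t + Lc with ha
      set b := W + φ - γ * Lc with hb2
      have hjen := hUconc.concaveOn.2 (Set.mem_univ a) (Set.mem_univ b)
        (le_of_lt (lt_trans hα hαγ)) (by linarith : (0:ℝ) ≤ 1 - γ) (by ring)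
      simp only [smul_eq_mul] at hjen
      have hmean : γ * a + (1 - γ) * b = W + φ + γ * t - γ * L := by
        rw [ha, hb2]; ring
      have hmono : U (γ * a + (1 - γ) * b) ≤ U (W + V - γ * L) := by
        apply hUmono.monotone
        rw [hmean]; linarith
      linarith
end

section
/- Let 0 < α < γ < 1, ψ > 0, V ≥ 0, L ≥ 0, W ∈ ℝ, and let U : ℝ → ℝ be strictly increasing and strictly concave on ℝ. Define the feasible set D = {(φ,t,L_c) ∈ ℝ³ : φ ≥ 0, 0 ≤ t ≤ L, L_c ≥ 0, and (if (γ−α)·t ≥ ψ then φ + ψ + α·t ≤ V else φ + γ·t ≤ V)} and the objective G(φ,t,L_c) = (if (γ−α)·t ≥ ψ then H^h(φ,t,L_c) else H^l(φ,t,L_c)), where H^l(φ,t,L_c) = γ·U(W + φ − γ·L_c − L + t + L_c) + (1−γ)·U(W + φ − γ·L_c) and H^h(φ,t,L_c) = α·U(W + φ − α·L_c − L + t + L_c) + (1−α)·U(W + φ − α·L_c). If ψ ≤ (γ−α)·L and γ·ψ ≤ (γ−α)·V, then (φ,t,L_c) = (V − γ·ψ/(γ−α), ψ/(γ−α), L −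 ψ/(γ−α)) is a maximizer of G over D, with optimal value U(W + V − ψ − α·L). -/
lemma scenarioA_conc_le (U : ℝ → ℝ) (hUconc : StrictConcaveOn ℝ Set.univ U)
    (p a b : ℝ) (hp0 : 0 ≤ p) (hp1 : p ≤ 1) :
    p * U a + (1 - p) * U b ≤ U (p * a + (1 - p) * b) := by
  have h1 : (0:ℝ) ≤ 1 - p := by linarith
  have h2 : p + (1 - p) = 1 := by ring
  have := hUconc.concaveOn.2 (Set.mem_univ a) (Set.mem_univ b) hp0 h1 h2
  simpa [smul_eq_mul] using this

/-- Scenario A contract design (Theorem 1, second case): if `ψ ≤ (γ−α)·L` and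
`γ·ψ ≤ (γ−α)·V`, then the contract
`(φ,t,L_c) = (V − γ·ψ/(γ−α), ψ/(γ−α), L − ψ/(γ−α))` maximizes the provider's
expected utility `G` over the feasible set `D`, with optimal value `U(W + V − ψ − α·L)`. -/
theorem scenarioA_optimal_contract_high_investment
    (α γ V W L ψ : ℝ) (hα : 0 < α) (hαγ : α < γ) (hγ : γ < 1)
    (hψ : 0 < ψ) (hV : 0 ≤ V) (hL : 0 ≤ L)
    (U : ℝ → ℝ) (hUmono : StrictMono U) (hUconc : StrictConcaveOn ℝ Set.univ U)
    (Hl Hh : ℝ → ℝ → ℝ → ℝ)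
    (hHl : ∀ φ t Lc, Hl φ t Lc =
      γ * U (W + φ - γ * Lc - L + t + Lc) + (1 - γ) * U (W + φ - γ * Lc))
    (hHh : ∀ φ t Lc, Hh φ t Lc =
      α * U (W + φ - α * Lc - L + t + Lc) + (1 - α) * U (W + φ - α * Lc))
    (D : Set (ℝ × ℝ × ℝ))
    (hD : D = {x : ℝ × ℝ × ℝ |
      0 ≤ x.1 ∧ 0 ≤ x.2.1 ∧ x.2.1 ≤ L ∧ 0 ≤ x.2.2 ∧
      (if ψ ≤ (γ - α) * x.2.1 then x.1 + ψ + α * x.2.1 ≤ V else x.1 + γ * x.2.1 ≤ V)})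
    (G : ℝ × ℝ × ℝ → ℝ)
    (hG : ∀ x : ℝ × ℝ × ℝ, G x =
      if ψ ≤ (γ - α) * x.2.1 then Hh x.1 x.2.1 x.2.2 else Hl x.1 x.2.1 x.2.2)
    (hcase₁ : ψ ≤ (γ - α) * L) (hcase₂ : γ * ψ ≤ (γ - α) * V) :
    (V - γ * ψ / (γ - α), ψ / (γ - α), L - ψ / (γ - α)) ∈ D ∧
    IsMaxOn G D (V - γ * ψ / (γ - α), ψ / (γ - α), L - ψ / (γ - α)) ∧
    G (V - γ * ψ / (γ - α), ψ / (γ - α), L - ψ / (γ - α)) = U (W + V - ψ - α * L) := by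
  have hd : (0:ℝ) < γ - α := sub_pos.2 hαγ
  have hdne : γ - α ≠ 0 := ne_of_gt hd
  have hts : (γ - α) * (ψ / (γ - α)) = ψ := by field_simp
  have hφs : 0 ≤ V - γ * ψ / (γ - α) := by
    rw [sub_nonneg, div_le_iff₀ hd]
    linarith
  have htL : ψ / (γ - α) ≤ L := (div_le_iff₀ hd).2 (by linarith)
  have hmem : (V - γ * ψ / (γ - α), ψ / (γ - α), L - ψ / (γ - α)) ∈ D := by
    rw [hD]
    refine ⟨hφs, le_of_lt (div_pos hψ hd), htL, by linarith, ?_⟩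
    simp only [hts, le_refl, if_true]
    have : γ * ψ / (γ - α) = γ * (ψ / (γ - α)) := by ring
    rw [this]
    have : α * (ψ / (γ - α)) - γ * (ψ / (γ - α)) = -ψ := by
      field_simp; ring
    linarith
  have hval : G (V - γ * ψ / (γ - α), ψ / (γ - α), L - ψ / (γ - α))
      = U (W + V - ψ - α * L) := by
    rw [hG]
    simp only [hts, le_refl, if_true, hHh]
    have e1 : W + (V - γ * ψ / (γ - α)) - α * (L - ψ / (γ - α)) - L + ψ / (γ - α)
        + (L - ψ / (γ - α)) = W + V - ψ - α * L := by
      field_simp; ring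
    have e2 : W + (V - γ * ψ / (γ - α)) - α * (L - ψ / (γ - α)) = W + V - ψ - α * L := by
      field_simp; ring
    rw [e1, e2]; ring
  refine ⟨hmem, ?_, hval⟩
  intro x hx
  rw [hD] at hx
  obtain ⟨hφ, ht0, htL', hLc, hcon⟩ := hx
  simp only [Set.mem_setOf_eq, hval]
  rw [hG]
  obtain ⟨φ, t, Lc⟩ := x
  dsimp only at *
  split_ifs at hcon ⊢ with h
  · -- high investment case
    rw [hHh]
    have key := scenarioA_conc_le U hUconc α (W + φ - α * Lc - L + t + Lc)
      (W + φ - α * Lc) (le_of_lt hα) (by linarith)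
    refine key.trans ?_
    apply hUmono.monotone
    nlinarith
  · -- low investment case
    rw [hHl]
    have key := scenarioA_conc_le U hUconc γ (W + φ - γ * Lc - L + t + Lc)
      (W + φ - γ * Lc) (by linarith) (by linarith)
    refine key.trans ?_
    apply hUmono.monotone
    nlinarith
end

section
/- Let k ≥ 2 be an integer, let p₁, p_k be real numbers with 0 < p₁ < p_k < k·p₁, let A, L, L_c be real numbers, and let U : ℝ → ℝ be differentiable with U'(x) > 0 for all x and with U' strictly antitone on ℝ. Define H^k(t) = p₁·U(A − p_k·L_c − L − (k−1)·t + L_c) + (p_k − p₁)·U(A − p_k·L_c − L + t + L_c) + (1 − p_k)·U(A − p_k·L_c). Then for every t ≥ 0, the derivative of H^k at t is strictly negative. -/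
/-!
Raising the fine by `dt` costs the breached provider `(k - 1)·dt` with probability `p₁`, weighted
by the marginal utility at the low wealth `x₁`, and pays it `dt` with probability `pk - p₁`,
weighted at the higher wealth `x₂ = x₁ + k·t ≥ x₁`. Concavity gives `U'(x₂) ≤ U'(x₁)`, so the
net effect is at most `(pk - k·p₁)·U'(x₁) < 0`.
-/

theorem hasDerivAt_fine_utility {U : ℝ → ℝ} (hU : Differentiable ℝ U) (k p₁ pk A L Lc t : ℝ) :
    HasDerivAt (fun t : ℝ =>
        p₁ * U (A - pk * Lc - L - (k - 1) * t + Lc) +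
        (pk - p₁) * U (A - pk * Lc - L + t + Lc) +
        (1 - pk) * U (A - pk * Lc))
      ((pk - p₁) * deriv U (A - pk * Lc - L + t + Lc) -
        (k - 1) * p₁ * deriv U (A - pk * Lc - L - (k - 1) * t + Lc)) t := by
  have hx₁ : HasDerivAt (fun t : ℝ => A - pk * Lc - L - (k - 1) * t + Lc) (-(k - 1)) t := by
    simpa using (((hasDerivAt_id t).const_mul (k - 1)).const_sub (A - pk * Lc - L)).add_const Lc
  have hx₂ : HasDerivAt (fun t : ℝ => A - pk * Lc - L + t + Lc) 1 t :=
    ((hasDerivAt_id t).const_add (A - pk * Lc - L)).add_const Lc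
  refine ((((hU _).hasDerivAt.comp t hx₁).const_mul p₁).add
    (((hU _).hasDerivAt.comp t hx₂).const_mul (pk - p₁))).add_const
      ((1 - pk) * U (A - pk * Lc)) |>.congr_deriv ?_
  ring

theorem mul_sub_mul_neg_of_le {w c u v : ℝ} (hw : 0 ≤ w) (hwc : w < c) (hu : 0 < u)
    (hvu : v ≤ u) : w * v - c * u < 0 := by
  have : w * v < c * u := calc
    w * v ≤ w * u := mul_le_mul_of_nonneg_left hvu hw
    _ < c * u := mul_lt_mul_of_pos_right hwc hu
  linarith

theorem scenarioB_fine_derivative_neg_general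
    (k : ℕ) (p₁ pk A L Lc : ℝ)
    (hp₁k : p₁ < pk) (hpk : pk < (k : ℝ) * p₁)
    (U : ℝ → ℝ) (hUdiff : Differentiable ℝ U)
    (hU' : ∀ x : ℝ, 0 < deriv U x) (hU'anti : StrictAnti (deriv U)) :
    ∀ t : ℝ, 0 ≤ t →
      deriv (fun t : ℝ =>
        p₁ * U (A - pk * Lc - L - ((k : ℝ) - 1) * t + Lc) +
        (pk - p₁) * U (A - pk * Lc - L + t + Lc) +
        (1 - pk) * U (A - pk * Lc)) t < 0 := by
  intro t ht
  rw [(hasDerivAt_fine_utility hUdiff k p₁ pk A L Lc t).deriv]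
  have hwealth : A - pk * Lc - L - ((k : ℝ) - 1) * t + Lc ≤ A - pk * Lc - L + t + Lc := by
    linarith [mul_nonneg (Nat.cast_nonneg k) ht]
  exact mul_sub_mul_neg_of_le (by linarith) (by linarith) (hU' _) (hU'anti.antitone hwealth)

/-- Scenario B (Proposition 3, key computation): the derivative of a participating
provider's expected utility `Hᵏ` with respect to the fine `t` is strictly negative
for every `t ≥ 0`. -/
theorem scenarioB_fine_derivative_neg
    (k : ℕ) (hk : 2 ≤ k) (p₁ pk A L Lc : ℝ)
    (hp₁ : 0 < p₁) (hp₁k : p₁ < pk) (hpk : pk < (k : ℝ) * p₁)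
    (U : ℝ → ℝ) (hUdiff : Differentiable ℝ U)
    (hU' : ∀ x : ℝ, 0 < deriv U x) (hU'anti : StrictAnti (deriv U)) :
    ∀ t : ℝ, 0 ≤ t →
      deriv (fun t : ℝ =>
        p₁ * U (A - pk * Lc - L - ((k : ℝ) - 1) * t + Lc) +
        (pk - p₁) * U (A - pk * Lc - L + t + Lc) +
        (1 - pk) * U (A - pk * Lc)) t < 0 :=
  scenarioB_fine_derivative_neg_general k p₁ pk A L Lc hp₁k hpk U hUdiff hU' hU'anti
end

section
/- Let k ≥ 2 be an integer, let p₁, p_k be real numbers with 0 < p₁ < p_k < k·p₁, let A, L_c be real numbers and L > 0, and let U : ℝ → ℝ be differentiable with U'(x) > 0 for all x and with U' strictly antitone on ℝ. Define H^k(t) = p₁·U(A − p_k·L_c − L − (k−1)·t + L_c) + (p_k − p₁)·U(A − p_k·L_c − L + t + L_c) + (1 − p_k)·U(A − p_k·L_c). Then H^k is strictly antitone on the interval [0, L]; in particular, t = 0 is the unique maximizer of H^k over [0, L]. -/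
/-!
Writing `c = A - p_k L_c - L + L_c`, the utility is
`Hᵏ t = p₁ U (c - (k-1) t) + (p_k - p₁) U (c + t)` plus a constant. Its derivative is
`-p₁ (k-1) U'(c - (k-1) t) + (p_k - p₁) U'(c + t)`. For `t ≥ 0` the first argument lies left
of the second, so concavity gives `U'(c + t) ≤ U'(c - (k-1) t)` and the derivative is at most
`(p_k - k p₁) U'(c - (k-1) t) < 0`.
-/

open Set

section

variable {f : ℝ → ℝ} {a b c m : ℝ}

theorem hasDerivAt_mul_comp_sub_add_mul_comp_add (hf : Differentiable ℝ f) (t : ℝ) :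
    HasDerivAt (fun t => a * f (c - m * t) + b * f (c + t))
      (-(a * m) * deriv f (c - m * t) + b * deriv f (c + t)) t := by
  have hleft : HasDerivAt (fun t => c - m * t) (-m) t := by
    simpa using ((hasDerivAt_id t).const_mul m).const_sub c
  have hright : HasDerivAt (fun t => c + t) 1 t := (hasDerivAt_id t).const_add c
  exact ((((hf _).hasDerivAt.comp t hleft).const_mul a).add
    (((hf _).hasDerivAt.comp t hright).const_mul b)).congr_deriv (by ring)

theorem strictAntiOn_Ici_mul_comp_sub_add_mul_comp_add (hf : Differentiable ℝ f)
    (hf'pos : ∀ x, 0 < deriv f x) (hf'anti : Antitone (deriv f)) (hb : 0 ≤ b) (hbam : b < a * m)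
    (hm : -1 ≤ m) :
    StrictAntiOn (fun t => a * f (c - m * t) + b * f (c + t)) (Ici 0) := by
  refine strictAntiOn_of_hasDerivWithinAt_neg (convex_Ici 0)
    (fun t _ => (hasDerivAt_mul_comp_sub_add_mul_comp_add hf t).continuousAt.continuousWithinAt)
    (fun t _ => (hasDerivAt_mul_comp_sub_add_mul_comp_add hf t).hasDerivWithinAt) ?_
  intro t ht
  rw [interior_Ici, mem_Ioi] at ht
  have hslope : deriv f (c + t) ≤ deriv f (c - m * t) := hf'anti (by nlinarith)
  calc -(a * m) * deriv f (c - m * t) + b * deriv f (c + t)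
      ≤ (b - a * m) * deriv f (c - m * t) := by
        linarith [mul_le_mul_of_nonneg_left hslope hb]
    _ < 0 := mul_neg_of_neg_of_pos (by linarith) (hf'pos _)

end

theorem StrictAntiOn.isMaxOn_iff_eq_of_isLeast {α β : Type*} [LinearOrder α] [Preorder β]
    {g : α → β} {s : Set α} {a x : α} (hg : StrictAntiOn g s) (ha : IsLeast s a)
    (hx : x ∈ s) :
    IsMaxOn g s x ↔ x = a := by
  constructor
  · intro hmax
    exact le_antisymm ((hg.le_iff_ge ha.1 hx).mp (hmax ha.1)) (ha.2 hx)
  · rintro rfl y hy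
    exact (hg.le_iff_ge hy ha.1).mpr (ha.2 hy)

theorem scenarioB_optimal_fine_zero_general
    (k : ℕ) (p₁ pk A Lc L : ℝ)
    (hp₁k : p₁ < pk) (hpk : pk < (k : ℝ) * p₁)
    (U : ℝ → ℝ) (hUdiff : Differentiable ℝ U)
    (hU' : ∀ x : ℝ, 0 < deriv U x) (hU'anti : StrictAnti (deriv U))
    (Hk : ℝ → ℝ)
    (hHk : ∀ t : ℝ, Hk t =
      p₁ * U (A - pk * Lc - L - ((k : ℝ) - 1) * t + Lc) +
      (pk - p₁) * U (A - pk * Lc - L + t + Lc) +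
      (1 - pk) * U (A - pk * Lc)) :
    StrictAntiOn Hk (Set.Icc 0 L) ∧
    IsMaxOn Hk (Set.Icc 0 L) 0 ∧
    ∀ t ∈ Set.Icc (0 : ℝ) L, IsMaxOn Hk (Set.Icc 0 L) t → t = 0 := by
  set c := A - pk * Lc - L + Lc
  have hHk' : ∀ t, Hk t = (p₁ * U (c - ((k : ℝ) - 1) * t) + (pk - p₁) * U (c + t)) +
      (1 - pk) * U (A - pk * Lc) := fun t => by
    rw [hHk]; simp only [c]; ring_nf
  have hspread := strictAntiOn_Ici_mul_comp_sub_add_mul_comp_add (a := p₁) (m := (k : ℝ) - 1)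
    (c := c) hUdiff hU' hU'anti.antitone (sub_nonneg.mpr hp₁k.le) (by linarith)
    (by linarith [k.cast_nonneg (α := ℝ)])
  have hanti : StrictAntiOn Hk (Icc 0 L) := fun s hs t ht hst => by
    rw [hHk', hHk']
    linarith [hspread (Icc_subset_Ici_self hs) (Icc_subset_Ici_self ht) hst]
  refine ⟨hanti, fun t ht => ?_, fun t ht => ?_⟩
  · have h0L : (0 : ℝ) ≤ L := ht.1.trans ht.2
    exact (hanti.isMaxOn_iff_eq_of_isLeast (isLeast_Icc h0L) (left_mem_Icc.mpr h0L)).mpr rfl ht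
  · exact (hanti.isMaxOn_iff_eq_of_isLeast (isLeast_Icc (ht.1.trans ht.2)) ht).mp

/-- Scenario B (Proposition 3): a participating provider's expected utility `Hᵏ` is
strictly decreasing in the fine `t` on `[0, L]`; in particular `t = 0` is the unique
maximizer of `Hᵏ` over `[0, L]`. -/
theorem scenarioB_optimal_fine_zero
    (k : ℕ) (hk : 2 ≤ k) (p₁ pk A Lc L : ℝ) (hL : 0 < L)
    (hp₁ : 0 < p₁) (hp₁k : p₁ < pk) (hpk : pk < (k : ℝ) * p₁)
    (U : ℝ → ℝ) (hUdiff : Differentiable ℝ U)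
    (hU' : ∀ x : ℝ, 0 < deriv U x) (hU'anti : StrictAnti (deriv U))
    (Hk : ℝ → ℝ)
    (hHk : ∀ t : ℝ, Hk t =
      p₁ * U (A - pk * Lc - L - ((k : ℝ) - 1) * t + Lc) +
      (pk - p₁) * U (A - pk * Lc - L + t + Lc) +
      (1 - pk) * U (A - pk * Lc)) :
    StrictAntiOn Hk (Set.Icc 0 L) ∧
    IsMaxOn Hk (Set.Icc 0 L) 0 ∧
    ∀ t ∈ Set.Icc (0 : ℝ) L, IsMaxOn Hk (Set.Icc 0 L) t → t = 0 :=
  scenarioB_optimal_fine_zero_general k p₁ pk A Lc L hp₁k hpk U hUdiff hU' hU'anti Hk hHk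
end

section
/- Let k ≥ 2 be an integer, let p₁, p_k be real numbers with 0 < p₁ < p_k < 1 and p_k < k·p₁, let W, v_k be real numbers and L > 0, and let U : ℝ → ℝ be differentiable with U'(x) > 0 for all x and with U' strictly antitone on ℝ (hence U is strictly increasing and strictly concave). Define H^1(L_c) = p₁·U(W − p₁·L_c − L + L_c) + (1 − p₁)·U(W − p₁·L_c) and H^k(t, L_c) = p₁·U(v_k·W − p_k·L_c − L − (k−1)·t + L_c) + (p_k − p₁)·U(v_k·W − p_k·L_c − L + t + L_c) + (1 − p_k)·U(v_k·W − p_k·L_c), and the objective J(s, t, L_c) = (1 − s)·H^1(L_c) + s·H^k(t, L_c) over the feasible set {(s,t,L_c) : 0 ≤ s ≤ 1, 0 ≤ t ≤ L, L_c ≥ 0}. If W − p₁·L > v_k·W − p_k·L, then (s, t, L_c) = (0, 0, L) is a maximizer of J over the feasible set, with optimal value U(W − p₁·L). -/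
/-!
With an actuarially fair premium the expected wealth of a stand-alone provider is `W − p₁·L`
whatever the payout `L_c`, so by Jensen's inequality `H¹(L_c) ≤ U(W − p₁·L)`, with equality
under full insurance `L_c = L`. In the consortium the expected wealth is
`v_k·W − p_k·L + t·(p_k − k·p₁) ≤ v_k·W − p_k·L < W − p₁·L`, so Jensen and monotonicity of `U`
bound `Hᵏ(t, L_c)` by the same value, and `J` is a convex combination of the two.
-/

open Set

theorem ConcaveOn.le_map_sum_three {U : ℝ → ℝ} (hU : ConcaveOn ℝ univ U) {a b c : ℝ}
    (ha : 0 ≤ a) (hb : 0 ≤ b) (hc : 0 ≤ c) (habc : a + b + c = 1) (x y z : ℝ) :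
    a * U x + b * U y + c * U z ≤ U (a * x + b * y + c * z) := by
  have h := hU.le_map_sum (t := Finset.univ) (w := ![a, b, c]) (p := ![x, y, z])
    (by simp [Fin.forall_fin_succ, ha, hb, hc]) (by simp [Fin.sum_univ_three, habc])
    (fun _ _ => mem_univ _)
  simpa [Fin.sum_univ_three] using h

section ExpectedUtility

variable {U : ℝ → ℝ} {p₁ pk W vk L : ℝ}

theorem standalone_expectedUtility_le (hU : ConcaveOn ℝ univ U) (hp₁ : 0 ≤ p₁) (hp₁1 : p₁ ≤ 1)
    (Lc : ℝ) :
    p₁ * U (W - p₁ * Lc - L + Lc) + (1 - p₁) * U (W - p₁ * Lc) ≤ U (W - p₁ * L) := by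
  have h := hU.2 (mem_univ (W - p₁ * Lc - L + Lc)) (mem_univ (W - p₁ * Lc)) hp₁
    (sub_nonneg.2 hp₁1) (add_sub_cancel p₁ 1)
  simp only [smul_eq_mul] at h
  calc _ ≤ U (p₁ * (W - p₁ * Lc - L + Lc) + (1 - p₁) * (W - p₁ * Lc)) := h
    _ = U (W - p₁ * L) := by ring_nf

theorem consortium_expectedUtility_le (hU : ConcaveOn ℝ univ U) (hUmono : Monotone U)
    {k t : ℝ} (hp₁ : 0 ≤ p₁) (hp₁k : p₁ ≤ pk) (hpk1 : pk ≤ 1) (hpk : pk ≤ k * p₁) (ht : 0 ≤ t)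
    (Lc : ℝ) :
    p₁ * U (vk * W - pk * Lc - L - (k - 1) * t + Lc) +
      (pk - p₁) * U (vk * W - pk * Lc - L + t + Lc) + (1 - pk) * U (vk * W - pk * Lc) ≤
      U (vk * W - pk * L) := by
  have hmean : p₁ * (vk * W - pk * Lc - L - (k - 1) * t + Lc) +
      (pk - p₁) * (vk * W - pk * Lc - L + t + Lc) + (1 - pk) * (vk * W - pk * Lc) =
      vk * W - pk * L + t * (pk - k * p₁) := by ring
  calc _ ≤ U (vk * W - pk * L + t * (pk - k * p₁)) := by
        rw [← hmean]
        exact hU.le_map_sum_three hp₁ (sub_nonneg.2 hp₁k) (sub_nonneg.2 hpk1) (by ring) _ _ _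
    _ ≤ U (vk * W - pk * L) :=
        hUmono (add_le_of_nonpos_right (mul_nonpos_of_nonneg_of_nonpos ht (sub_nonpos.2 hpk)))

end ExpectedUtility

theorem scenarioB_optimal_contract_no_participation_general
    (k : ℕ) (p₁ pk W vk L : ℝ)
    (hp₁ : 0 < p₁) (hp₁k : p₁ < pk) (hpk1 : pk < 1) (hpk : pk < (k : ℝ) * p₁)
    (U : ℝ → ℝ) (hUdiff : Differentiable ℝ U)
    (hU' : ∀ x : ℝ, 0 < deriv U x) (hU'anti : StrictAnti (deriv U))
    (H1 : ℝ → ℝ)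
    (hH1 : ∀ Lc : ℝ, H1 Lc =
      p₁ * U (W - p₁ * Lc - L + Lc) + (1 - p₁) * U (W - p₁ * Lc))
    (Hk : ℝ → ℝ → ℝ)
    (hHk : ∀ t Lc : ℝ, Hk t Lc =
      p₁ * U (vk * W - pk * Lc - L - ((k : ℝ) - 1) * t + Lc) +
      (pk - p₁) * U (vk * W - pk * Lc - L + t + Lc) +
      (1 - pk) * U (vk * W - pk * Lc))
    (J : ℝ × ℝ × ℝ → ℝ)
    (hJ : ∀ x : ℝ × ℝ × ℝ, J x = (1 - x.1) * H1 x.2.2 + x.1 * Hk x.2.1 x.2.2)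
    (F : Set (ℝ × ℝ × ℝ))
    (hF : F = {x : ℝ × ℝ × ℝ |
      0 ≤ x.1 ∧ x.1 ≤ 1 ∧ 0 ≤ x.2.1 ∧ x.2.1 ≤ L ∧ 0 ≤ x.2.2})
    (hcase : W - p₁ * L > vk * W - pk * L) :
    IsMaxOn J F (0, 0, L) ∧ J (0, 0, L) = U (W - p₁ * L) := by
  have hUmono : StrictMono U := strictMono_of_deriv_pos hU'
  have hU : ConcaveOn ℝ univ U :=
    (hU'anti.strictConcaveOn_univ_of_deriv hUdiff.continuous).concaveOn
  have hval : J (0, 0, L) = U (W - p₁ * L) := by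
    rw [hJ, hH1]
    ring_nf
  refine ⟨fun x hx => ?_, hval⟩
  obtain ⟨hs0, hs1, ht0, -, -⟩ : 0 ≤ x.1 ∧ x.1 ≤ 1 ∧ 0 ≤ x.2.1 ∧ x.2.1 ≤ L ∧ 0 ≤ x.2.2 := by
    rwa [hF] at hx
  have hH1le : H1 x.2.2 ≤ U (W - p₁ * L) := by
    rw [hH1]
    exact standalone_expectedUtility_le hU hp₁.le (by linarith) _
  have hHkle : Hk x.2.1 x.2.2 ≤ U (W - p₁ * L) := by
    rw [hHk]
    exact (consortium_expectedUtility_le hU hUmono.monotone hp₁.le hp₁k.le hpk1.le hpk.le ht0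
      _).trans (hUmono.monotone hcase.le)
  show J x ≤ J (0, 0, L)
  rw [hval, hJ]
  linarith [mul_le_mul_of_nonneg_left hH1le (sub_nonneg.2 hs1),
    mul_le_mul_of_nonneg_left hHkle hs0]

/-- Scenario B contract design (Theorem 2, first case): if `W − p₁·L > v_k·W − p_k·L`,
then `(s, t, L_c) = (0, 0, L)` maximizes the objective
`J(s,t,L_c) = (1 − s)·H¹(L_c) + s·Hᵏ(t, L_c)` over the feasible set
`{(s,t,L_c) : 0 ≤ s ≤ 1, 0 ≤ t ≤ L, L_c ≥ 0}`, with optimal value `U(W − p₁·L)`. -/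
theorem scenarioB_optimal_contract_no_participation
    (k : ℕ) (hk : 2 ≤ k) (p₁ pk W vk L : ℝ) (hL : 0 < L)
    (hp₁ : 0 < p₁) (hp₁k : p₁ < pk) (hpk1 : pk < 1) (hpk : pk < (k : ℝ) * p₁)
    (U : ℝ → ℝ) (hUdiff : Differentiable ℝ U)
    (hU' : ∀ x : ℝ, 0 < deriv U x) (hU'anti : StrictAnti (deriv U))
    (H1 : ℝ → ℝ)
    (hH1 : ∀ Lc : ℝ, H1 Lc =
      p₁ * U (W - p₁ * Lc - L + Lc) + (1 - p₁) * U (W - p₁ * Lc))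
    (Hk : ℝ → ℝ → ℝ)
    (hHk : ∀ t Lc : ℝ, Hk t Lc =
      p₁ * U (vk * W - pk * Lc - L - ((k : ℝ) - 1) * t + Lc) +
      (pk - p₁) * U (vk * W - pk * Lc - L + t + Lc) +
      (1 - pk) * U (vk * W - pk * Lc))
    (J : ℝ × ℝ × ℝ → ℝ)
    (hJ : ∀ x : ℝ × ℝ × ℝ, J x = (1 - x.1) * H1 x.2.2 + x.1 * Hk x.2.1 x.2.2)
    (F : Set (ℝ × ℝ × ℝ))
    (hF : F = {x : ℝ × ℝ × ℝ |
      0 ≤ x.1 ∧ x.1 ≤ 1 ∧ 0 ≤ x.2.1 ∧ x.2.1 ≤ L ∧ 0 ≤ x.2.2})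
    (hcase : W - p₁ * L > vk * W - pk * L) :
    IsMaxOn J F (0, 0, L) ∧ J (0, 0, L) = U (W - p₁ * L) :=
  scenarioB_optimal_contract_no_participation_general k p₁ pk W vk L hp₁ hp₁k hpk1 hpk U hUdiff hU'
    hU'anti H1 hH1 Hk hHk J hJ F hF hcase
end
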